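/- arXiv:1501.00589 — 2 statements merged into one kernel-verified Lean document; each statement's English description precedes it below -/
import Mathlib

section
/- Let h be the associative algebra over ℂ generated by elements h_n for n ∈ ℤ \ {0} with relations [h_m, h_n] = m·δ_{m,-n}. Define p^(n) and q^(n) for n ≥ 0 by the generating functions Σ_{n≥0} p^(n) z^n = exp(Σ_{n≥1} (h_{-n}/n) z^n) and Σ_{n≥0} q^(n) z^n = exp(Σ_{n≥1} (h_n/n) z^n) (interpreted in h[[z]]). Then q^(n) p^(m) = Σ_{k≥0} p^(m-k) q^(n-k), where p^(j) = q^(j) = 0 for j < 0. -/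
/-!
Write `Σ p_n z^n = exp G` and `Σ q_n z^n = exp F` with `G = Σ h_{-j} z^j / j` and
`F = Σ h_j z^j / j`. The coefficients of `g^k` vanish below degree `k`, so in each degree the
exponential may be replaced by a truncation `Σ_{k<N} g^k / k!`.

For a derivation `D` such that `D g` commutes with `g`, `D (exp g) = D g · exp g`. For the Euler
operator `z d/dz` and `F` (whose coefficients commute) this is the recursion
`n q_n = Σ_{i=1}^n h_i q_{n-i}`; for `ad h_j` and `G`, where `ad h_j G = z^j` is central, it is
`h_j p_M = p_M h_j + p_{M-j}`. Induct on `n`: expand `n q_n p_m` by the recursion, move each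
`h_i` past `p` and apply the induction hypothesis. The term `p_{m-k} q_{n-k}` then comes up
`n - k` times from the first kind of summand (by the recursion for `q_{n-k}`) and `k` times from
the second, so `n q_n p_m = n Σ_k p_{m-k} q_{n-k}`.
-/

open Finset PowerSeries
open scoped Nat

section Leibniz

variable {R : Type*} [Ring R]

theorem map_one_eq_zero_of_leibniz (D : R → R) (hD : ∀ a b, D (a * b) = D a * b + a * D b) :
    D 1 = 0 := by
  simpa using hD 1 1

theorem map_pow_succ_of_leibniz (D : R → R) (hD : ∀ a b, D (a * b) = D a * b + a * D b) {g : R}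
    (hg : Commute (D g) g) (k : ℕ) : D (g ^ (k + 1)) = (k + 1) • (D g * g ^ k) := by
  induction k with
  | zero => simp
  | succ k ih =>
    rw [pow_succ, hD, ih, ← (hg.pow_right (k + 1)).eq, smul_mul_assoc, mul_assoc, ← pow_succ]
    exact (succ_nsmul _ _).symm

end Leibniz

theorem inv_factorial_smul_succ_nsmul (𝕜 : Type*) [Field 𝕜] [CharZero 𝕜] {M : Type*}
    [AddCommMonoid M] [Module 𝕜 M] (k : ℕ) (x : M) :
    ((k + 1)! : 𝕜)⁻¹ • ((k + 1) • x) = (k ! : 𝕜)⁻¹ • x := by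
  rw [← Nat.cast_smul_eq_nsmul 𝕜, smul_smul, Nat.factorial_succ, Nat.cast_mul, mul_inv_rev,
    inv_mul_cancel_right₀ (Nat.cast_ne_zero.2 k.succ_ne_zero)]

section ExpTrunc

variable (𝕜 : Type*) [Field 𝕜] {R : Type*} [Ring R] [Algebra 𝕜 R]

def expTrunc (g : R) (N : ℕ) : R := ∑ k ∈ range N, (k ! : 𝕜)⁻¹ • g ^ k

theorem map_expTrunc_succ [CharZero 𝕜] (D : R →ₗ[𝕜] R)
    (hD : ∀ a b, D (a * b) = D a * b + a * D b) {g : R} (hg : Commute (D g) g) (N : ℕ) :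
    D (expTrunc 𝕜 g (N + 1)) = D g * expTrunc 𝕜 g N := by
  rw [expTrunc, sum_range_succ', map_add, map_sum, pow_zero, map_smul,
    map_one_eq_zero_of_leibniz D hD, smul_zero, add_zero, expTrunc, mul_sum]
  refine sum_congr rfl fun k _ => ?_
  rw [map_smul, map_pow_succ_of_leibniz D hD hg, inv_factorial_smul_succ_nsmul, mul_smul_comm]

end ExpTrunc

namespace PowerSeries

variable {A : Type*} [Ring A]

theorem coeff_pow_eq_zero_of_lt {g : A⟦X⟧} (hg : constantCoeff g = 0) {n k : ℕ} (h : n < k) :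
    coeff n (g ^ k) = 0 :=
  coeff_of_lt_order n ((Nat.cast_lt.2 h).trans_le (le_order_pow_of_constantCoeff_eq_zero k hg))

theorem commute_of_commute_coeff {f g : A⟦X⟧} (h : ∀ i j, Commute (coeff i f) (coeff j g)) :
    Commute f g := by
  ext n
  rw [coeff_mul, coeff_mul, ← Finset.Nat.sum_antidiagonal_swap]
  exact sum_congr rfl fun x _ => (h x.2 x.1).eq

section Euler

variable (S : Type*) [Semiring S] [Module S A]

/-- The Euler operator `z d/dz`; `PowerSeries.derivative` needs commutative coefficients. -/
noncomputable def eulerOp : A⟦X⟧ →ₗ[S] A⟦X⟧ where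
  toFun f := mk fun n => n • coeff n f
  map_add' f g := by ext; simp
  map_smul' c f := by ext; simp [smul_comm]

@[simp]
theorem coeff_eulerOp (f : A⟦X⟧) (n : ℕ) : coeff n (eulerOp S f) = n • coeff n f :=
  coeff_mk n fun n => n • coeff n f

theorem eulerOp_mul (f g : A⟦X⟧) : eulerOp S (f * g) = eulerOp S f * g + f * eulerOp S g := by
  ext n
  simp only [coeff_eulerOp, map_add, coeff_mul, smul_sum, ← sum_add_distrib]
  refine sum_congr rfl fun x hx => ?_
  rw [← mem_antidiagonal.1 hx, add_nsmul, smul_mul_assoc, mul_smul_comm]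

end Euler

variable (𝕜 : Type*) [Field 𝕜] [Algebra 𝕜 A]

theorem coeff_expTrunc {g : A⟦X⟧} (hg : constantCoeff g = 0) {n N : ℕ} (hn : n < N) :
    coeff n (expTrunc 𝕜 g N) = ∑ k ∈ range (n + 1), (k ! : 𝕜)⁻¹ • coeff n (g ^ k) := by
  rw [expTrunc, map_sum]
  simp_rw [PowerSeries.coeff_smul]
  refine (sum_subset (range_subset_range.2 hn) fun k _ hk => ?_).symm
  have hnk : n < k := by rw [Finset.mem_range] at hk; omega
  rw [coeff_pow_eq_zero_of_lt hg hnk, smul_zero]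

noncomputable def logSeries (f : ℕ → A) : A⟦X⟧ :=
  mk fun j => if j = 0 then 0 else (j : 𝕜)⁻¹ • f j

@[simp]
theorem constantCoeff_logSeries (f : ℕ → A) : constantCoeff (logSeries 𝕜 f) = 0 := by
  simp [logSeries, ← coeff_zero_eq_constantCoeff_apply]

theorem commute_coeff_logSeries {f : ℕ → A} (hf : ∀ i j, 0 < i → 0 < j → Commute (f i) (f j))
    (i j : ℕ) : Commute (coeff i (logSeries 𝕜 f)) (coeff j (logSeries 𝕜 f)) := by
  simp only [logSeries, coeff_mk]
  split_ifs with hi hj hj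
  · exact .zero_left _
  · exact .zero_left _
  · exact .zero_right _
  · exact ((hf i j (by omega) (by omega)).smul_left _).smul_right _

variable [CharZero 𝕜]

theorem nsmul_coeff_expTrunc_succ {g : A⟦X⟧} (hg : ∀ i j, Commute (coeff i g) (coeff j g))
    (n N : ℕ) :
    n • coeff n (expTrunc 𝕜 g (N + 1))
      = ∑ x ∈ antidiagonal n, (x.1 • coeff x.1 g) * coeff x.2 (expTrunc 𝕜 g N) := by
  have hcomm : Commute (eulerOp 𝕜 g) g :=
    commute_of_commute_coeff fun i j => by rw [coeff_eulerOp]; exact (hg i j).smul_left i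
  rw [← coeff_eulerOp 𝕜,
    map_expTrunc_succ 𝕜 (eulerOp 𝕜 : A⟦X⟧ →ₗ[𝕜] A⟦X⟧) (eulerOp_mul 𝕜) hcomm, coeff_mul]
  simp only [coeff_eulerOp]

theorem commutator_coeff_expTrunc_succ {g : A⟦X⟧} {a : A} {j : ℕ}
    (ha : ∀ i, a * coeff i g - coeff i g * a = if i = j then 1 else 0) (n N : ℕ) :
    a * coeff n (expTrunc 𝕜 g (N + 1)) - coeff n (expTrunc 𝕜 g (N + 1)) * a
      = if j ≤ n then coeff (n - j) (expTrunc 𝕜 g N) else 0 := by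
  let D := LinearMap.mulLeft 𝕜 (C a) - LinearMap.mulRight 𝕜 (C a)
  have hD : ∀ f, D f = C a * f - f * C a := fun f => rfl
  have hD_coeff : ∀ f n, coeff n (D f) = a * coeff n f - coeff n f * a := by
    simp [hD, coeff_C_mul, coeff_mul_C]
  have hD_leibniz : ∀ u v, D (u * v) = D u * v + u * D v := by
    intro u v; simp only [hD]; noncomm_ring
  have hDg : D g = X ^ j := by ext i; rw [hD_coeff, ha, coeff_X_pow]
  have hcomm : Commute (D g) g := by rw [hDg]; exact (commute_X_pow g j).symm
  rw [← hD_coeff, map_expTrunc_succ 𝕜 D hD_leibniz hcomm, hDg, coeff_X_pow_mul']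

theorem succ_nsmul_coeff_logSeries (f : ℕ → A) (i : ℕ) :
    (i + 1) • coeff (i + 1) (logSeries 𝕜 f) = f (i + 1) := by
  rw [logSeries, coeff_mk, if_neg i.succ_ne_zero, ← Nat.cast_smul_eq_nsmul 𝕜, smul_smul,
    mul_inv_cancel₀ (Nat.cast_ne_zero.2 i.succ_ne_zero), one_smul]

theorem commutator_coeff_logSeries {f : ℕ → A} {a : A} {j : ℕ} (hj : 0 < j)
    (ha : ∀ i, 0 < i → a * f i - f i * a = if i = j then (j : 𝕜) • 1 else 0) (i : ℕ) :
    a * coeff i (logSeries 𝕜 f) - coeff i (logSeries 𝕜 f) * a = if i = j then 1 else 0 := by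
  simp only [logSeries, coeff_mk]
  split_ifs with hi hij hij
  · omega
  · simp
  · subst hij
    rw [mul_smul_comm, smul_mul_assoc, ← smul_sub, ha i hj, if_pos rfl, smul_smul,
      inv_mul_cancel₀ (Nat.cast_ne_zero.2 hi), one_smul]
  · rw [mul_smul_comm, smul_mul_assoc, ← smul_sub, ha i (by omega), if_neg hij, smul_zero]

variable {f : ℕ → A} {e : ℤ → A}

theorem nsmul_eq_sum_of_eq_coeff_expTrunc (hf : ∀ i j, 0 < i → 0 < j → Commute (f i) (f j))
    (he : ∀ n N : ℕ, n < N → e n = coeff n (expTrunc 𝕜 (logSeries 𝕜 f) N)) (n : ℕ) :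
    n • e n = ∑ i ∈ range n, f (i + 1) * e (n - (i + 1)) := by
  have key := nsmul_coeff_expTrunc_succ 𝕜 (commute_coeff_logSeries 𝕜 hf) n (n + 1)
  rw [Nat.sum_antidiagonal_eq_sum_range_succ
    (fun i k => (i • coeff i (logSeries 𝕜 f)) * coeff k (expTrunc 𝕜 (logSeries 𝕜 f) (n + 1))),
    sum_range_succ'] at key
  simp only [zero_smul, zero_mul, add_zero, succ_nsmul_coeff_logSeries 𝕜] at key
  rw [he n (n + 2) (by omega), key]
  refine sum_congr rfl fun i hi => ?_
  rw [mem_range] at hi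
  have h := he (n - (i + 1)) (n + 1) (by omega)
  push_cast [Nat.cast_sub (by omega : i + 1 ≤ n)] at h
  rw [h]

theorem mul_eq_add_of_eq_coeff_expTrunc {a : A} {j : ℕ} (hj : 0 < j)
    (ha : ∀ i, 0 < i → a * f i - f i * a = if i = j then (j : 𝕜) • 1 else 0)
    (he_neg : ∀ n < 0, e n = 0)
    (he : ∀ n N : ℕ, n < N → e n = coeff n (expTrunc 𝕜 (logSeries 𝕜 f) N)) (M : ℤ) :
    a * e M = e M * a + e (M - j) := by
  rcases lt_or_ge M 0 with hM | hM
  · rw [he_neg M hM, he_neg _ (by omega), mul_zero, zero_mul, add_zero]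
  lift M to ℕ using hM
  have key := commutator_coeff_expTrunc_succ 𝕜 (commutator_coeff_logSeries 𝕜 hj ha) M (M + 1)
  rw [← he M (M + 2) (by omega), sub_eq_iff_eq_add'] at key
  rw [key]
  congr 1
  split_ifs with hjM
  · have h := he (M - j) (M + 1) (by omega)
    push_cast [Nat.cast_sub hjM] at h
    exact h.symm
  · exact (he_neg _ (by omega)).symm

end PowerSeries

theorem sum_range_sum_range_add_succ {M : Type*} [AddCommMonoid M] (c : ℕ → M) {n : ℕ}
    (hc : ∀ l, n < l → c l = 0) :
    ∑ i ∈ range n, ∑ k ∈ range (n + 1), c (k + (i + 1)) = ∑ l ∈ range (n + 1), l • c l := by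
  have inner : ∀ i ∈ range n,
      ∑ k ∈ range (n + 1), c (k + (i + 1)) = ∑ l ∈ Ico (i + 1) (n + 1), c l := by
    intro i _
    rw [sum_Ico_eq_sum_range]
    refine (sum_subset (range_subset_range.2 (Nat.sub_le _ _)) fun k _ hk => ?_).symm.trans
      (sum_congr rfl fun k _ => by rw [add_comm])
    rw [mem_range] at hk
    exact hc _ (by omega)
  rw [sum_congr rfl inner, sum_comm' (t' := range (n + 1)) (s' := range)]
  · simp only [sum_const, card_range]
  · intro i l
    simp only [mem_range, mem_Ico]
    omega

theorem mul_eq_sum_mul_of_nsmul_eq_sum {A : Type*} [Ring A] [IsAddTorsionFree A] (a : ℕ → A)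
    (p q : ℤ → A) (hq_neg : ∀ j < 0, q j = 0) (hq_zero : q 0 = 1)
    (hq_rec : ∀ n : ℕ, n • q n = ∑ i ∈ range n, a (i + 1) * q (n - (i + 1)))
    (ha : ∀ (i : ℕ) (M : ℤ), a (i + 1) * p M = p M * a (i + 1) + p (M - (i + 1))) (n m : ℕ) :
    q n * p m = ∑ k ∈ range (n + 1), p (m - k) * q (n - k) := by
  induction n using Nat.strong_induction_on with
  | _ n ih =>
  rcases Nat.eq_zero_or_pos n with rfl | hn
  · simp [hq_zero]
  have ih' : ∀ i ∈ range n,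
      q (n - (i + 1)) * p m = ∑ k ∈ range (n + 1), p (m - k) * q (n - (i + 1) - k) := by
    intro i hi
    rw [mem_range] at hi
    have h := ih (n - (i + 1)) (by omega)
    push_cast [Nat.cast_sub (by omega : i + 1 ≤ n)] at h
    rw [h]
    refine sum_subset (range_subset_range.2 (by omega)) fun k _ hk => ?_
    rw [mem_range] at hk
    rw [hq_neg _ (by omega), mul_zero]
  have hq_rec_shift : ∀ k ∈ range (n + 1),
      (n - k) • q (n - k) = ∑ i ∈ range n, a (i + 1) * q (n - k - (i + 1)) := by
    intro k hk
    rw [mem_range] at hk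
    have h := hq_rec (n - k)
    push_cast [Nat.cast_sub (by omega : k ≤ n)] at h
    rw [h]
    refine sum_subset (range_subset_range.2 (by omega)) fun i _ hi => ?_
    rw [mem_range] at hi
    rw [hq_neg _ (by omega), mul_zero]
  apply nsmul_right_injective hn.ne'
  calc n • (q n * p m) = ∑ i ∈ range n, a (i + 1) * (q (n - (i + 1)) * p m) := by
        rw [← smul_mul_assoc, hq_rec, sum_mul]
        simp_rw [mul_assoc]
    _ = ∑ i ∈ range n, ∑ k ∈ range (n + 1),
          (p (m - k) * (a (i + 1) * q (n - k - (i + 1)))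
            + p (m - ↑(k + (i + 1))) * q (n - ↑(k + (i + 1)))) := by
        refine sum_congr rfl fun i hi => ?_
        rw [ih' i hi, mul_sum]
        refine sum_congr rfl fun k _ => ?_
        rw [← mul_assoc, ha, add_mul, mul_assoc, sub_right_comm (n : ℤ)]
        push_cast
        simp only [sub_sub]
    _ = ∑ k ∈ range (n + 1), p (m - k) * ((n - k) • q (n - k))
          + ∑ k ∈ range (n + 1), k • (p (m - k) * q (n - k)) := by
        simp only [sum_add_distrib]
        congr 1
        · rw [sum_comm]
          exact sum_congr rfl fun k hk => by rw [hq_rec_shift k hk, mul_sum]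
        · exact sum_range_sum_range_add_succ (fun l => p (m - l) * q (n - l)) fun l hl => by
            rw [hq_neg _ (by omega), mul_zero]
    _ = n • ∑ k ∈ range (n + 1), p (m - k) * q (n - k) := by
        rw [smul_sum, ← sum_add_distrib]
        refine sum_congr rfl fun k hk => ?_
        rw [mem_range] at hk
        rw [mul_smul_comm, ← add_nsmul, Nat.sub_add_cancel (by omega)]

/-- In the Heisenberg algebra `h` with `[h_m, h_n] = m δ_{m,-n}`, the elements
`p⁽ⁿ⁾` and `q⁽ⁿ⁾` defined by the exponential generating series
`Σ p⁽ⁿ⁾ zⁿ = exp(Σ_{n≥1} h_{-n}/n zⁿ)` and `Σ q⁽ⁿ⁾ zⁿ = exp(Σ_{n≥1} h_n/n zⁿ)`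
(with `p⁽ʲ⁾ = q⁽ʲ⁾ = 0` for `j < 0`) satisfy
`q⁽ⁿ⁾ p⁽ᵐ⁾ = Σ_{k≥0} p⁽ᵐ⁻ᵏ⁾ q⁽ⁿ⁻ᵏ⁾`.  Here `expPS` is the exponential of a power
series with vanishing constant term, characterized coefficientwise by
`coeff n (exp f) = Σ_{k=0}^{n} (1/k!) coeff n (f^k)`. -/
theorem trace_heisenberg_stmt0 {A : Type*} [Ring A] [Algebra ℂ A]
    (h : ℤ → A)
    (hrel : ∀ m n : ℤ, m ≠ 0 → n ≠ 0 →
      h m * h n - h n * h m = if m = -n then (m : ℂ) • (1 : A) else 0)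
    (p q : ℤ → A)
    (hp0 : ∀ j : ℤ, j < 0 → p j = 0) (hq0 : ∀ j : ℤ, j < 0 → q j = 0)
    (expPS : PowerSeries A → PowerSeries A)
    (hexp : ∀ (f : PowerSeries A) (n : ℕ),
      PowerSeries.coeff (R := A) n (expPS f)
        = ∑ k ∈ Finset.range (n + 1),
            ((k.factorial : ℂ)⁻¹) • PowerSeries.coeff (R := A) n (f ^ k))
    (hP : ∀ n : ℕ, p n = PowerSeries.coeff (R := A) n
      (expPS (PowerSeries.mk fun j : ℕ =>
        if j = 0 then 0 else ((j : ℂ)⁻¹) • h (-(j : ℤ)))))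
    (hQ : ∀ n : ℕ, q n = PowerSeries.coeff (R := A) n
      (expPS (PowerSeries.mk fun j : ℕ =>
        if j = 0 then 0 else ((j : ℂ)⁻¹) • h (j : ℤ)))) :
    ∀ m n : ℕ, q n * p m
      = ∑ k ∈ Finset.range (min m n + 1), p ((m : ℤ) - k) * q ((n : ℤ) - k) := by
  have : IsAddTorsionFree A := .of_isTorsionFree ℂ A
  have h_comm : ∀ a b : ℤ, a ≠ 0 → b ≠ 0 → a ≠ -b → Commute (h a) (h b) := fun a b ha hb hab =>
    sub_eq_zero.1 (by rw [hrel a b ha hb, if_neg hab])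
  have hq : ∀ n N : ℕ, n < N → q n = coeff n (expTrunc ℂ (logSeries ℂ fun j => h j) N) :=
    fun n N hn => by rw [hQ, hexp, coeff_expTrunc ℂ (constantCoeff_logSeries ℂ _) hn]; rfl
  have hp : ∀ n N : ℕ, n < N → p n = coeff n (expTrunc ℂ (logSeries ℂ fun j => h (-j)) N) :=
    fun n N hn => by rw [hP, hexp, coeff_expTrunc ℂ (constantCoeff_logSeries ℂ _) hn]; rfl
  have hq_zero : q 0 = 1 := by simpa [expTrunc] using hq 0 1 one_pos
  have hq_rec := nsmul_eq_sum_of_eq_coeff_expTrunc ℂ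
    (fun i j hi hj => h_comm i j (by omega) (by omega) (by omega)) hq
  have hh_p : ∀ (i : ℕ) (M : ℤ), h ↑(i + 1) * p M = p M * h ↑(i + 1) + p (M - ↑(i + 1)) :=
    fun i => mul_eq_add_of_eq_coeff_expTrunc ℂ i.succ_pos
      (fun k hk => by
        rw [hrel (i + 1 : ℕ) (-k) (by omega) (by omega)]
        simp only [neg_neg, Nat.cast_inj, Int.cast_natCast, @eq_comm _ (i + 1)])
      hp0 hp
  intro m n
  rw [mul_eq_sum_mul_of_nsmul_eq_sum (fun j => h j) p q hq0 hq_zero hq_rec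
    (by simpa using hh_p) n m]
  refine (sum_subset (range_subset_range.2 (by omega)) fun k _ hk => ?_).symm
  rw [mem_range] at hk
  rcases lt_or_ge m k with hmk | hkm
  · rw [hp0 _ (by omega), zero_mul]
  · rw [hq0 _ (by omega), mul_zero]
end

section
/- The brackets [b_k, b_l] = k·δ_{k,-l}·c, [L_k, L_l] = (k-l)·L_{k+l} + ((k³-k)/12)·δ_{k,-l}·c, [L_l, b_k] = -k·b_{l+k}, [c, −] = 0 define a Lie algebra structure on the ℂ-vector space with basis {c} ∪ {b_l : l ∈ ℤ \ {0}} ∪ {L_k : k ∈ ℤ}; that is, the bracket is antisymmetric and satisfies the Jacobi identity. -/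
/-- The underlying space of the Heisenberg–Virasoro algebra: free ℂ-vector
space on basis `{c} ∪ {b_l : l ≠ 0} ∪ {L_k : k ∈ ℤ}`. -/
abbrev HVBasis : Type := Unit ⊕ ({l : ℤ // l ≠ 0} ⊕ ℤ)

abbrev HVSpace : Type := HVBasis →₀ ℂ

noncomputable def HVc : HVSpace := Finsupp.single (Sum.inl ()) 1

noncomputable def HVb (l : ℤ) (hl : l ≠ 0) : HVSpace :=
  Finsupp.single (Sum.inr (Sum.inl ⟨l, hl⟩)) 1

/-- `b_l` extended by `b_0 = 0`. -/
noncomputable def HVb' (l : ℤ) : HVSpace :=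
  if h : l = 0 then 0 else HVb l h

noncomputable def HVL (k : ℤ) : HVSpace :=
  Finsupp.single (Sum.inr (Sum.inr k)) 1

/-!
The bracket is prescribed on basis vectors and extended bilinearly. Antisymmetry and the Jacobi
identity, written as the Leibniz rule `[x, [y, z]] = [[x, y], z] + [y, [x, z]]`, are multilinear,
so it suffices to check them on basis vectors. Given antisymmetry, the Leibniz rule for a triple
is equivalent to the Leibniz rule for any permutation of it, and `c` is central, so only the
triples `(b, b, b)`, `(L, b, b)`, `(L, L, b)` and `(L, L, L)` remain; for `(L, L, L)` the central
terms cancel by the cocycle identity for `(k³ - k) / 12`.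
-/

namespace LinearMap

variable {R M : Type*} [CommSemiring R] [AddCommGroup M] [Module R M]

def IsLeibnizAt (f : M →ₗ[R] M →ₗ[R] M) (x y z : M) : Prop :=
  f x (f y z) = f (f x y) z + f y (f x z)

variable {f : M →ₗ[R] M →ₗ[R] M} {x y z : M}

theorem IsLeibnizAt.swap_left (hf : ∀ x y, f x y = -f y x) (h : f.IsLeibnizAt x y z) :
    f.IsLeibnizAt y x z := by
  rw [IsLeibnizAt, hf y x, map_neg, neg_apply, h]
  abel

theorem IsLeibnizAt.swap_right (hf : ∀ x y, f x y = -f y x) (h : f.IsLeibnizAt x y z) :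
    f.IsLeibnizAt x z y := by
  rw [IsLeibnizAt, hf z y, map_neg, h, hf (f x z) y, hf z (f x y)]
  abel

end LinearMap

namespace Finsupp

theorem antisymm_of_single {R ι M : Type*} [CommSemiring R] [AddCommGroup M] [Module R M]
    {f : (ι →₀ R) →ₗ[R] (ι →₀ R) →ₗ[R] M}
    (h : ∀ i j, f (single i 1) (single j 1) = -f (single j 1) (single i 1)) (x y : ι →₀ R) :
    f x y = -f y x := by
  have hflip : f = -f.flip := by
    ext i j
    exact h i j
  exact congr($hflip x y)

theorem isLeibnizAt_of_single {R ι : Type*} [CommRing R]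
    {f : (ι →₀ R) →ₗ[R] (ι →₀ R) →ₗ[R] (ι →₀ R)}
    (h : ∀ i j k, f.IsLeibnizAt (single i 1) (single j 1) (single k 1)) (x y z : ι →₀ R) :
    f.IsLeibnizAt x y z := by
  unfold LinearMap.IsLeibnizAt at *
  induction x using Finsupp.induction_linear with
  | zero => simp
  | add x x' hx hx' => simp only [map_add, LinearMap.add_apply, hx, hx']; abel
  | single i a =>
  induction y using Finsupp.induction_linear with
  | zero => simp
  | add y y' hy hy' => simp only [map_add, LinearMap.add_apply, hy, hy']; abel
  | single j b =>
  induction z using Finsupp.induction_linear with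
  | zero => simp
  | add z z' hz hz' => simp only [map_add, hz, hz']; abel
  | single k c =>
  simp only [← smul_single_one _ a, ← smul_single_one _ b, ← smul_single_one _ c, map_smul,
    LinearMap.smul_apply, h i j k, smul_add]
  module

end Finsupp

namespace HeisenbergVirasoro

noncomputable def bracketBasis : HVBasis → HVBasis → HVSpace
  | .inl _, _ => 0
  | .inr _, .inl _ => 0
  | .inr (.inl ⟨k, _⟩), .inr (.inl ⟨l, _⟩) => if k = -l then (k : ℂ) • HVc else 0
  | .inr (.inl ⟨k, _⟩), .inr (.inr l) => (k : ℂ) • HVb' (l + k)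
  | .inr (.inr l), .inr (.inl ⟨k, _⟩) => (-(k : ℂ)) • HVb' (l + k)
  | .inr (.inr k), .inr (.inr l) =>
      ((k : ℂ) - l) • HVL (k + l) + if k = -l then (((k : ℂ) ^ 3 - k) / 12) • HVc else 0

noncomputable def bracket : HVSpace →ₗ[ℂ] HVSpace →ₗ[ℂ] HVSpace :=
  Finsupp.linearCombination ℂ fun i => Finsupp.linearCombination ℂ (bracketBasis i)

theorem bracket_single_one (i j : HVBasis) :
    bracket (.single i 1) (.single j 1) = bracketBasis i j := by
  simp [bracket]

theorem HVb'_zero : HVb' 0 = 0 := dif_pos rfl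

theorem HVb'_of_ne_zero {k : ℤ} (hk : k ≠ 0) : HVb' k = HVb k hk := dif_neg hk

theorem bracket_HVb'_HVb' (k l : ℤ) :
    bracket (HVb' k) (HVb' l) = if k = -l then (k : ℂ) • HVc else 0 := by
  rcases eq_or_ne k 0 with rfl | hk
  · simp [HVb'_zero]
  rcases eq_or_ne l 0 with rfl | hl
  · simp [HVb'_zero, hk]
  rw [HVb'_of_ne_zero hk, HVb'_of_ne_zero hl, HVb, HVb, bracket_single_one, bracketBasis]

theorem bracket_HVL_HVb' (l k : ℤ) : bracket (HVL l) (HVb' k) = (-(k : ℂ)) • HVb' (l + k) := by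
  rcases eq_or_ne k 0 with rfl | hk
  · simp [HVb'_zero]
  rw [HVb'_of_ne_zero hk, HVb, HVL, bracket_single_one, bracketBasis]

theorem bracket_HVL_HVL (k l : ℤ) :
    bracket (HVL k) (HVL l)
      = ((k : ℂ) - l) • HVL (k + l) + if k = -l then (((k : ℂ) ^ 3 - k) / 12) • HVc else 0 := by
  rw [HVL, HVL, bracket_single_one, bracketBasis]

theorem bracket_HVc_left (x : HVSpace) : bracket HVc x = 0 := by
  have : bracketBasis (.inl ()) = 0 := rfl
  simp [HVc, bracket, this]

theorem bracketBasis_antisymm (i j : HVBasis) : bracketBasis i j = -bracketBasis j i := by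
  rcases i with _ | ⟨k, hk⟩ | k <;> rcases j with _ | ⟨l, hl⟩ | l <;>
    simp only [bracketBasis, neg_zero]
  · by_cases h : k = -l
    · subst h; simp
    · rw [if_neg h, if_neg (by omega), neg_zero]
  · rw [add_comm]; module
  · rw [add_comm]; module
  · by_cases h : k = -l
    · subst h; simp; module
    · rw [if_neg h, if_neg (by omega), add_comm l]; module

theorem bracket_antisymm (x y : HVSpace) : bracket x y = -bracket y x :=
  Finsupp.antisymm_of_single
    (fun i j => by rw [bracket_single_one, bracket_single_one, bracketBasis_antisymm]) x y

theorem bracket_HVc_right (x : HVSpace) : bracket x HVc = 0 := by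
  rw [bracket_antisymm, bracket_HVc_left, neg_zero]

theorem bracket_ite_smul_HVc_left (p : Prop) [Decidable p] (a : ℂ) (x : HVSpace) :
    bracket (if p then a • HVc else 0) x = 0 := by
  split_ifs <;> simp [bracket_HVc_left]

theorem bracket_ite_smul_HVc_right (p : Prop) [Decidable p] (a : ℂ) (x : HVSpace) :
    bracket x (if p then a • HVc else 0) = 0 := by
  split_ifs <;> simp [bracket_HVc_right]

theorem isLeibnizAt_HVb'_HVb'_HVb' (k l m : ℤ) :
    bracket.IsLeibnizAt (HVb' k) (HVb' l) (HVb' m) := by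
  simp only [LinearMap.IsLeibnizAt, bracket_HVb'_HVb', bracket_ite_smul_HVc_left,
    bracket_ite_smul_HVc_right, add_zero]

theorem isLeibnizAt_HVL_HVb'_HVb' (k l m : ℤ) :
    bracket.IsLeibnizAt (HVL k) (HVb' l) (HVb' m) := by
  simp only [LinearMap.IsLeibnizAt, bracket_HVb'_HVb', bracket_HVL_HVb', map_smul,
    LinearMap.smul_apply, bracket_ite_smul_HVc_right, smul_ite, smul_zero, smul_smul]
  by_cases h : k + l + m = 0
  · rw [if_pos (by omega), if_pos (by omega), ← add_smul]
    obtain rfl : m = -k - l := by omega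
    push_cast
    module
  · rw [if_neg (by omega), if_neg (by omega), add_zero]

theorem isLeibnizAt_HVL_HVL_HVb' (k l m : ℤ) :
    bracket.IsLeibnizAt (HVL k) (HVL l) (HVb' m) := by
  simp only [LinearMap.IsLeibnizAt, bracket_HVL_HVL, bracket_HVL_HVb', map_add,
    LinearMap.add_apply, map_smul, LinearMap.smul_apply, bracket_ite_smul_HVc_left, add_zero,
    smul_smul]
  rw [← add_assoc, ← add_assoc, add_comm l k]
  push_cast
  module

theorem isLeibnizAt_HVL_HVL_HVL (k l m : ℤ) :
    bracket.IsLeibnizAt (HVL k) (HVL l) (HVL m) := by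
  simp only [LinearMap.IsLeibnizAt, bracket_HVL_HVL, map_add, LinearMap.add_apply, map_smul,
    LinearMap.smul_apply, bracket_ite_smul_HVc_left, bracket_ite_smul_HVc_right, add_zero]
  rw [← add_assoc, ← add_assoc, add_comm l k]
  by_cases h : k + l + m = 0
  · rw [if_pos (by omega), if_pos (by omega), if_pos (by omega)]
    obtain rfl : m = -k - l := by omega
    push_cast
    module
  · rw [if_neg (by omega), if_neg (by omega), if_neg (by omega)]
    push_cast
    module

theorem single_one_cases (i : HVBasis) :
    Finsupp.single i 1 = HVc ∨ (∃ k, Finsupp.single i 1 = HVb' k) ∨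
      ∃ k, Finsupp.single i 1 = HVL k := by
  rcases i with _ | ⟨k, hk⟩ | k
  · exact .inl rfl
  · exact .inr (.inl ⟨k, (HVb'_of_ne_zero hk).symm⟩)
  · exact .inr (.inr ⟨k, rfl⟩)

theorem isLeibnizAt_single (i₁ i₂ i₃ : HVBasis) :
    bracket.IsLeibnizAt (.single i₁ 1) (.single i₂ 1) (.single i₃ 1) := by
  have hf := bracket_antisymm
  rcases single_one_cases i₁ with h₁ | ⟨k, h₁⟩ | ⟨k, h₁⟩ <;>
  rcases single_one_cases i₂ with h₂ | ⟨l, h₂⟩ | ⟨l, h₂⟩ <;>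
  rcases single_one_cases i₃ with h₃ | ⟨m, h₃⟩ | ⟨m, h₃⟩ <;>
  rw [h₁, h₂, h₃] <;>
  try solve
    | simp only [LinearMap.IsLeibnizAt, bracket_HVc_left, bracket_HVc_right, map_zero,
        LinearMap.zero_apply, add_zero]
  · exact isLeibnizAt_HVb'_HVb'_HVb' k l m
  · exact ((isLeibnizAt_HVL_HVb'_HVb' m k l).swap_left hf).swap_right hf
  · exact (isLeibnizAt_HVL_HVb'_HVb' l k m).swap_left hf
  · exact ((isLeibnizAt_HVL_HVL_HVb' l m k).swap_right hf).swap_left hf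
  · exact isLeibnizAt_HVL_HVb'_HVb' k l m
  · exact (isLeibnizAt_HVL_HVL_HVb' k m l).swap_right hf
  · exact isLeibnizAt_HVL_HVL_HVb' k l m
  · exact isLeibnizAt_HVL_HVL_HVL k l m

end HeisenbergVirasoro

/-- The brackets `[b_k, b_l] = k δ_{k,-l} c`,
`[L_k, L_l] = (k-l) L_{k+l} + ((k³-k)/12) δ_{k,-l} c`,
`[L_l, b_k] = -k b_{l+k}`, with `c` central, define a Lie algebra structure on
the ℂ-vector space with basis `{c} ∪ {b_l : l ≠ 0} ∪ {L_k : k ∈ ℤ}`: there is a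
bilinear bracket with those values on basis elements which is antisymmetric and
satisfies the Jacobi identity. -/
theorem trace_heisenberg_stmt9 :
    ∃ br : HVSpace →ₗ[ℂ] HVSpace →ₗ[ℂ] HVSpace,
      (∀ x y : HVSpace, br x y = -br y x)
      ∧ (∀ x y z : HVSpace, br x (br y z) = br (br x y) z + br y (br x z))
      ∧ (∀ x : HVSpace, br HVc x = 0)
      ∧ (∀ (k l : ℤ) (hk : k ≠ 0) (hl : l ≠ 0),
          br (HVb k hk) (HVb l hl) = if k = -l then (k : ℂ) • HVc else 0)
      ∧ (∀ k l : ℤ, br (HVL k) (HVL l)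
          = ((k : ℂ) - l) • HVL (k + l)
            + (if k = -l then (((k : ℂ) ^ 3 - k) / 12) • HVc else 0))
      ∧ (∀ (l k : ℤ) (hk : k ≠ 0),
          br (HVL l) (HVb k hk) = (-(k : ℂ)) • HVb' (l + k)) := by
  open HeisenbergVirasoro in
  exact ⟨bracket, bracket_antisymm, Finsupp.isLeibnizAt_of_single isLeibnizAt_single,
    bracket_HVc_left,
    fun k l hk hl => by
      rw [← HVb'_of_ne_zero hk, ← HVb'_of_ne_zero hl, bracket_HVb'_HVb'],
    bracket_HVL_HVL,
    fun l k hk => by rw [← HVb'_of_ne_zero hk, bracket_HVL_HVb']⟩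
end
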